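/- arXiv:0809.2034 — 6 statements merged into one kernel-verified Lean document; each statement's English description precedes it below -/
import Mathlib

section
/- In the braid group B₄ = ⟨a, b, c | aba = bab, bcb = cbc, ac = ca⟩, with d = (ac)⁻¹b(ac), e = a⁻¹ba, f = c⁻¹bc, the following relations hold: ba = ae, ae = eb, de = ec, ec = cd, bc = cf, cf = fb, df = fa, fa = ad, ca = ac, and ef = fe. -/
/-- Relators for the braid group `B₄ = ⟨a, b, c | aba = bab, bcb = cbc, ac = ca⟩`,
with generators indexed `0 ↦ a`, `1 ↦ b`, `2 ↦ c`. -/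
def braidRels : Set (FreeGroup (Fin 3)) :=
  { FreeGroup.of 0 * FreeGroup.of 1 * FreeGroup.of 0 *
      (FreeGroup.of 1 * FreeGroup.of 0 * FreeGroup.of 1)⁻¹,
    FreeGroup.of 1 * FreeGroup.of 2 * FreeGroup.of 1 *
      (FreeGroup.of 2 * FreeGroup.of 1 * FreeGroup.of 2)⁻¹,
    FreeGroup.of 0 * FreeGroup.of 2 * (FreeGroup.of 2 * FreeGroup.of 0)⁻¹ }

/-- The braid group on four strands. -/
abbrev B4 := PresentedGroup braidRels

namespace B4

def a : B4 := PresentedGroup.of 0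
def b : B4 := PresentedGroup.of 1
def c : B4 := PresentedGroup.of 2
def d : B4 := (a * c)⁻¹ * b * (a * c)
def e : B4 := a⁻¹ * b * a
def f : B4 := c⁻¹ * b * c

end B4

open B4

lemma rmem {r : FreeGroup (Fin 3)} (h : r ∈ braidRels) :
    PresentedGroup.mk braidRels r = 1 := by
  have : r ∈ Subgroup.normalClosure braidRels := Subgroup.subset_normalClosure h
  exact (QuotientGroup.eq_one_iff r).mpr this

lemma R1 : a * b * a = b * a * b := by
  have h := rmem (Set.mem_insert _ _)
  rw [map_mul, map_mul, map_mul, map_inv, map_mul, map_mul, mul_inv_eq_one] at h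
  exact h

lemma R2 : b * c * b = c * b * c := by
  have h := rmem (Set.mem_insert_of_mem _ (Set.mem_insert _ _))
  rw [map_mul, map_mul, map_mul, map_inv, map_mul, map_mul, mul_inv_eq_one] at h
  exact h

lemma R3 : a * c = c * a := by
  have h := rmem (Set.mem_insert_of_mem _ (Set.mem_insert_of_mem _ rfl))
  rw [map_mul, map_mul, map_inv, map_mul, mul_inv_eq_one] at h
  exact h

lemma hac : Commute a c := R3

lemma Rac' : a * c⁻¹ = c⁻¹ * a := hac.inv_right.eq

lemma Rca' : c * a⁻¹ = a⁻¹ * c := hac.inv_left.eq.symm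

lemma h1 : b * a = a * e := by simp only [e]; group

lemma h2 : a * e = e * b := by
  calc a * e = a⁻¹ * ((a*b)*a) := by simp only [e]; group
    _ = a⁻¹ * ((b*a)*b) := by rw [R1]
    _ = e * b := by simp only [e]; group

lemma h3 : d * e = e * c := by
  suffices h : (a*c) * (d*e) = (a*c) * (e*c) from mul_left_cancel h
  calc (a*c) * (d*e) = b*((a*c)*(a⁻¹*(b*a))) := by simp only [d,e]; group
    _ = b*((c*a)*(a⁻¹*(b*a))) := by rw [R3]
    _ = ((b*c)*b)*a := by group
    _ = ((c*b)*c)*a := by rw [R2]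
    _ = (c*b)*(c*a) := by group
    _ = (c*b)*(a*c) := by rw [← R3]
    _ = ((c*a)*a⁻¹)*(b*(a*c)) := by group
    _ = ((a*c)*a⁻¹)*(b*(a*c)) := by rw [← R3]
    _ = (a*c)*(e*c) := by simp only [e]; group

lemma h4 : e * c = c * d := by simp only [e,d]; group

lemma h5 : b * c = c * f := by simp only [f]; group

lemma h6 : c * f = f * b := by
  calc c * f = c⁻¹ * ((c*b)*c) := by simp only [f]; group
    _ = c⁻¹ * ((b*c)*b) := by rw [← R2]
    _ = f * b := by simp only [f]; group

lemma h7 : d * f = f * a := by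
  suffices h : (a*c) * (d*f) = (a*c) * (f*a) from mul_left_cancel h
  calc (a*c) * (d*f) = ((b*a)*b)*c := by simp only [d,f]; group
    _ = ((a*b)*a)*c := by rw [← R1]
    _ = (a*b)*(a*c) := by group
    _ = (a*b)*(c*a) := by rw [R3]
    _ = (a*c)*(f*a) := by simp only [f]; group

lemma h8 : f * a = a * d := by
  suffices h : c * (f*a) = c * (a*d) from mul_left_cancel h
  calc c * (f*a) = b*(c*a) := by simp only [f]; group
    _ = b*(a*c) := by rw [← R3]
    _ = (a*c)*((a*c)⁻¹*(b*(a*c))) := by group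
    _ = (c*a)*((a*c)⁻¹*(b*(a*c))) := by nth_rewrite 1 [R3]; rfl
    _ = c*(a*d) := by simp only [d]; group

lemma h10 : e * f = f * e := by
  suffices h : (b*(a*c)) * (e*f) = (b*(a*c)) * (f*e) from mul_left_cancel h
  calc (b*(a*c)) * (e*f)
      = (b*((a*c)*a⁻¹))*(b*((a*c⁻¹)*(b*c))) := by simp only [e,f]; group
    _ = (b*((c*a)*a⁻¹))*(b*((a*c⁻¹)*(b*c))) := by rw [R3]
    _ = ((b*c)*b)*((a*c⁻¹)*(b*c)) := by group
    _ = ((c*b)*c)*((a*c⁻¹)*(b*c)) := by rw [R2]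
    _ = (c*b)*((c*a)*(c⁻¹*(b*c))) := by group
    _ = (c*b)*((a*c)*(c⁻¹*(b*c))) := by rw [← R3]
    _ = c*(((b*a)*b)*c) := by group
    _ = c*(((a*b)*a)*c) := by rw [← R1]
    _ = (c*a)*(b*(a*c)) := by group
    _ = (a*c)*(b*(a*c)) := by rw [← R3]
    _ = (a*c)*(b*(c*a)) := by nth_rewrite 2 [R3]; rfl
    _ = (a*((c*b)*c))*a := by group
    _ = (a*((b*c)*b))*a := by rw [← R2]
    _ = ((a*b)*a)*((a⁻¹*c)*(b*a)) := by group
    _ = ((a*b)*a)*((c*a⁻¹)*(b*a)) := by rw [← Rca']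
    _ = ((b*a)*b)*((c*a⁻¹)*(b*a)) := by rw [R1]
    _ = (b*(a*c))*(f*e) := by simp only [e,f]; group

theorem statement0 :
    b * a = a * e ∧ a * e = e * b ∧
    d * e = e * c ∧ e * c = c * d ∧
    b * c = c * f ∧ c * f = f * b ∧
    d * f = f * a ∧ f * a = a * d ∧
    c * a = a * c ∧ e * f = f * e := by
  exact ⟨h1, h2, h3, h4, h5, h6, h7, h8, R3.symm, h10⟩
end

section
/- In the braid group B₄, with x = bac, d = (ac)⁻¹b(ac), e = a⁻¹ba, f = c⁻¹bc, conjugation by x permutes these elements as follows: x a x⁻¹ = e, x e x⁻¹ = c, x c x⁻¹ = f, x f x⁻¹ = a, x b x⁻¹ = d, and x d x⁻¹ = b. -/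
namespace B4

def x : B4 := b * a * c

end B4

open B4

/-! Since `a` and `c` commute, conjugating by `x = bac` acts on `a` and on `c` as conjugating by `b`,
and a braid relation `pqp = qpq` turns `p q p⁻¹` into `q⁻¹ p q`; every identity reduces to these
two moves, except `x d x⁻¹ = b`, which already holds in the free group. -/

section BraidConjugation

variable {G : Type*} [Group G] {a b c : G}

theorem mul_mul_inv_eq_of_braid (h : a * b * a = b * a * b) : a * b * a⁻¹ = b⁻¹ * a * b := by
  calc a * b * a⁻¹ = b⁻¹ * (a * b * a) * (b⁻¹ * b * a⁻¹) := by rw [h]; group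
    _ = b⁻¹ * a * b := by group

theorem bac_conj_left (hab : a * b * a = b * a * b) (hac : Commute a c) :
    b * a * c * a * (b * a * c)⁻¹ = a⁻¹ * b * a := by
  calc b * a * c * a * (b * a * c)⁻¹ = b * a * (c * a * c⁻¹) * a⁻¹ * b⁻¹ := by group
    _ = b * a * b⁻¹ := by rw [hac.symm.mul_inv_cancel]; group
    _ = a⁻¹ * b * a := mul_mul_inv_eq_of_braid hab.symm

theorem bac_conj_right (hbc : b * c * b = c * b * c) (hac : Commute a c) :
    b * a * c * c * (b * a * c)⁻¹ = c⁻¹ * b * c := by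
  calc b * a * c * c * (b * a * c)⁻¹ = b * (a * c * a⁻¹) * b⁻¹ := by group
    _ = b * c * b⁻¹ := by rw [hac.mul_inv_cancel]
    _ = c⁻¹ * b * c := mul_mul_inv_eq_of_braid hbc

theorem bac_conj_conj_left (hbc : b * c * b = c * b * c) (hac : Commute a c) :
    b * a * c * (a⁻¹ * b * a) * (b * a * c)⁻¹ = c := by
  rw [mul_inv_eq_iff_eq_mul]
  calc b * a * c * (a⁻¹ * b * a) = b * (a * c * a⁻¹) * b * a := by group
    _ = b * c * b * a := by rw [hac.mul_inv_cancel]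
    _ = c * b * (c * a) := by rw [hbc]; group
    _ = c * (b * a * c) := by rw [← hac.eq]; group

theorem bac_conj_conj_right (hab : a * b * a = b * a * b) :
    b * a * c * (c⁻¹ * b * c) * (b * a * c)⁻¹ = a := by
  rw [mul_inv_eq_iff_eq_mul]
  calc b * a * c * (c⁻¹ * b * c) = b * a * b * c := by group
    _ = a * (b * a * c) := by rw [← hab]; group

theorem bac_conj_middle (hab : a * b * a = b * a * b) (hbc : b * c * b = c * b * c)
    (hac : Commute a c) :
    b * a * c * b * (b * a * c)⁻¹ = (a * c)⁻¹ * b * (a * c) := by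
  calc b * a * c * b * (b * a * c)⁻¹ = b * a * (c * b * c⁻¹) * a⁻¹ * b⁻¹ := by group
    _ = (b * a * b⁻¹) * c * (b * a * b⁻¹)⁻¹ := by
        rw [mul_mul_inv_eq_of_braid hbc.symm]; group
    _ = a⁻¹ * b * (a * c * a⁻¹) * b⁻¹ * a := by
        rw [mul_mul_inv_eq_of_braid hab.symm]; group
    _ = a⁻¹ * (b * c * b⁻¹) * a := by rw [hac.mul_inv_cancel]; group
    _ = (a * c)⁻¹ * b * (a * c) := by rw [mul_mul_inv_eq_of_braid hbc, hac.eq]; group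

end BraidConjugation

namespace B4

theorem braid_ab : a * b * a = b * a * b :=
  PresentedGroup.mk_eq_mk_of_mul_inv_mem (by simp [braidRels])

theorem braid_bc : b * c * b = c * b * c :=
  PresentedGroup.mk_eq_mk_of_mul_inv_mem (by simp [braidRels])

theorem commute_ac : Commute a c :=
  PresentedGroup.mk_eq_mk_of_mul_inv_mem (by simp [braidRels])

end B4

theorem statement2 :
    x * a * x⁻¹ = e ∧ x * e * x⁻¹ = c ∧ x * c * x⁻¹ = f ∧
    x * f * x⁻¹ = a ∧ x * b * x⁻¹ = d ∧ x * d * x⁻¹ = b :=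
  ⟨bac_conj_left braid_ab commute_ac, bac_conj_conj_left braid_bc commute_ac,
    bac_conj_right braid_bc commute_ac, bac_conj_conj_right braid_ab,
    bac_conj_middle braid_ab braid_bc commute_ac, by simp only [x, d]; group⟩
end

section
/- In the braid group B₄ = ⟨a, b, c | aba = bab, bcb = cbc, ac = ca⟩, with x = bac, none of the elements x, x², x³ lies in the center of B₄. -/
open B4

/-- Map generators to adjacent transpositions in `S₄`. -/
def π : Fin 3 → Equiv.Perm (Fin 4)
  | 0 => Equiv.swap 0 1
  | 1 => Equiv.swap 1 2
  | 2 => Equiv.swap 2 3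

lemma π_rels : ∀ r ∈ braidRels, FreeGroup.lift π r = 1 := by
  intro r hr
  rcases hr with h | h | h <;> subst h <;> simp [π] <;> decide

/-- The induced homomorphism `B₄ → S₄`. -/
def φ : B4 →* Equiv.Perm (Fin 4) := PresentedGroup.toGroup π_rels

lemma φ_of (i : Fin 3) : φ (PresentedGroup.of i) = π i := PresentedGroup.toGroup.of π_rels

theorem statement4 :
    x ∉ Subgroup.center B4 ∧ x ^ 2 ∉ Subgroup.center B4 ∧ x ^ 3 ∉ Subgroup.center B4 := by
  have ha : φ a = π 0 := φ_of 0
  have hb : φ b = π 1 := φ_of 1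
  have hc : φ c = π 2 := φ_of 2
  refine ⟨fun h => ?_, fun h => ?_, fun h => ?_⟩ <;>
  · have := h.comm a
    have := congrArg φ this
    simp only [map_mul, map_pow, ha, hb, hc, x] at this
    revert this
    decide
end

section
/- Let W₃ = ⟨r, s, t | r² = s² = t² = 1⟩ and let E be the kernel of the homomorphism W₃ → ℤ/2ℤ sending each of r, s, t to 1. Then E is a characteristic subgroup of W₃: every automorphism of W₃ maps E onto E. -/
/-- Relators for the universal Coxeter group `W₃ = ⟨r, s, t | r² = s² = t² = 1⟩`,
with generators indexed `0 ↦ r`, `1 ↦ s`, `2 ↦ t`. -/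
def cox3Rels : Set (FreeGroup (Fin 3)) := { w | ∃ i : Fin 3, w = FreeGroup.of i ^ 2 }

/-- The universal Coxeter group of rank 3. -/
abbrev W3 := PresentedGroup cox3Rels

namespace W3

def r : W3 := PresentedGroup.of 0
def s : W3 := PresentedGroup.of 1
def t : W3 := PresentedGroup.of 2

/-- The parity homomorphism `W₃ → ℤ/2ℤ` sending each of `r`, `s`, `t` to `1`. -/
def parity : W3 →* Multiplicative (ZMod 2) :=
  PresentedGroup.toGroup (f := fun _ => Multiplicative.ofAdd 1)
    (by rintro w ⟨i, rfl⟩; simp [map_pow]; decide)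

/-- The subgroup of even-length elements of `W₃`. -/
def E : Subgroup W3 := parity.ker

end W3

/-!
Reduced words (no two equal adjacent letters) form a normal form for a universal Coxeter group,
and since generators are involutions the reduced word of `y⁻¹` is the reverse of that of `y`.
Hence the reduced word of an involution is a palindrome, and a reduced palindrome of even
positive length is impossible: its two middle letters would coincide. So every nontrivial
involution has odd length. An automorphism sends each generator to a nontrivial involution, so
it preserves parity, and the kernel of the parity map is invariant.
-/

theorem List.eq_nil_of_palindrome_of_isChain_ne {α : Type*} {l : List α} (hp : l.Palindrome)
    (hc : l.IsChain (· ≠ ·)) (he : Even l.length) : l = [] := by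
  induction hp with
  | nil => rfl
  | singleton x => simp at he
  | cons_concat x hl ih =>
    have hmid := ih ((List.isChain_cons.1 hc).2.left_of_append) (by simpa [parity_simps] using he)
    subst hmid
    simp at hc

def univCoxeterRels (α : Type*) : Set (FreeGroup α) := {w | ∃ i, w = FreeGroup.of i ^ 2}

abbrev UnivCoxeter (α : Type*) := PresentedGroup (univCoxeterRels α)

namespace UnivCoxeter

variable {α : Type*}

theorem of_mul_self (i : α) :
    (PresentedGroup.of i : UnivCoxeter α) * PresentedGroup.of i = 1 := by
  rw [← pow_two]
  exact PresentedGroup.one_of_mem ⟨i, rfl⟩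

theorem inv_of (i : α) : (PresentedGroup.of i : UnivCoxeter α)⁻¹ = PresentedGroup.of i :=
  inv_eq_of_mul_eq_one_right (of_mul_self i)

def wordProd (l : List α) : UnivCoxeter α := (l.map PresentedGroup.of).prod

@[simp] theorem wordProd_nil : wordProd ([] : List α) = 1 := rfl

@[simp] theorem wordProd_cons (a : α) (l : List α) :
    wordProd (a :: l) = PresentedGroup.of a * wordProd l := List.prod_cons

theorem wordProd_reverse (l : List α) : wordProd l.reverse = (wordProd l)⁻¹ := by
  simp [wordProd, List.prod_inv_reverse, Function.comp_def, inv_of]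

section NormalForm

variable [DecidableEq α]

/-- Left multiplication by the generator `i` on reduced words. -/
def consCancel (i : α) : List α → List α
  | [] => [i]
  | a :: l => if a = i then l else i :: a :: l

theorem consCancel_of_head?_ne {i : α} {l : List α} (h : l.head? ≠ some i) :
    consCancel i l = i :: l := by
  cases l with
  | nil => rfl
  | cons a l => simp_all [consCancel]

theorem isChain_consCancel (i : α) {l : List α} (hl : l.IsChain (· ≠ ·)) :
    (consCancel i l).IsChain (· ≠ ·) := by
  cases l with
  | nil => exact List.isChain_singleton i
  | cons a l =>
    by_cases h : a = i
    · simpa [consCancel, h] using hl.tail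
    · simpa [consCancel, h, Ne.symm h] using hl

theorem consCancel_consCancel (i : α) {l : List α} (hl : l.IsChain (· ≠ ·)) :
    consCancel i (consCancel i l) = l := by
  match l, hl with
  | [], _ => simp [consCancel]
  | [a], _ => by_cases h : a = i <;> simp [consCancel, h]
  | a :: b :: l, hl =>
    have hab : a ≠ b := (List.isChain_cons_cons.1 hl).1
    by_cases h : a = i
    · subst h; simp [consCancel, hab.symm]
    · simp [consCancel, h]

theorem wordProd_consCancel (i : α) (l : List α) :
    wordProd (consCancel i l) = PresentedGroup.of i * wordProd l := by
  cases l with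
  | nil => simp [consCancel]
  | cons a l =>
    by_cases h : a = i
    · subst h; simp [consCancel, ← mul_assoc, of_mul_self]
    · simp [consCancel, h]

abbrev ReducedWord (α : Type*) := {l : List α // l.IsChain (· ≠ ·)}

def genPerm (i : α) : Equiv.Perm (ReducedWord α) :=
  Function.Involutive.toPerm (fun w => ⟨consCancel i w.1, isChain_consCancel i w.2⟩)
    fun w => Subtype.ext (consCancel_consCancel i w.2)

def wordAction : UnivCoxeter α →* Equiv.Perm (ReducedWord α) :=
  PresentedGroup.toGroup (f := genPerm) <| by
    rintro _ ⟨i, rfl⟩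
    ext w : 1
    exact Subtype.ext (consCancel_consCancel i w.2)

def normalForm (y : UnivCoxeter α) : List α := (wordAction y ⟨[], List.isChain_nil⟩).1

theorem normalForm_isChain (y : UnivCoxeter α) : (normalForm y).IsChain (· ≠ ·) :=
  (wordAction y _).2

theorem normalForm_of_mul (i : α) (y : UnivCoxeter α) :
    normalForm (PresentedGroup.of i * y) = consCancel i (normalForm y) := by
  simp only [normalForm, wordAction, map_mul, Equiv.Perm.mul_apply, PresentedGroup.toGroup.of]
  rfl

theorem wordProd_normalForm (y : UnivCoxeter α) : wordProd (normalForm y) = y := by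
  have hy : y ∈ Subgroup.closure (Set.range PresentedGroup.of) := by simp
  refine Subgroup.closure_induction_left rfl ?_ ?_ hy
  · rintro _ ⟨i, rfl⟩ y _ ih
    rw [normalForm_of_mul, wordProd_consCancel, ih]
  · rintro _ ⟨i, rfl⟩ y _ ih
    rw [inv_of, normalForm_of_mul, wordProd_consCancel, ih]

theorem normalForm_wordProd {l : List α} (hl : l.IsChain (· ≠ ·)) :
    normalForm (wordProd l) = l := by
  induction l with
  | nil => rfl
  | cons a l ih =>
    obtain ⟨hhead, hl⟩ := List.isChain_cons.1 hl
    rw [wordProd_cons, normalForm_of_mul, ih hl]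
    exact consCancel_of_head?_ne fun h => hhead a h rfl

theorem normalForm_inv (y : UnivCoxeter α) : normalForm y⁻¹ = (normalForm y).reverse := by
  conv_lhs => rw [← wordProd_normalForm y, ← wordProd_reverse]
  exact normalForm_wordProd <|
    List.isChain_reverse.2 <| (normalForm_isChain y).imp fun _ _ => Ne.symm

theorem palindrome_normalForm_of_mul_self {y : UnivCoxeter α} (h : y * y = 1) :
    (normalForm y).Palindrome :=
  .of_reverse_eq <| by rw [← normalForm_inv, inv_eq_of_mul_eq_one_right h]

theorem eq_one_of_mul_self_of_even {y : UnivCoxeter α} (h : y * y = 1)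
    (he : Even (normalForm y).length) : y = 1 := by
  rw [← wordProd_normalForm y, List.eq_nil_of_palindrome_of_isChain_ne
    (palindrome_normalForm_of_mul_self h) (normalForm_isChain y) he, wordProd_nil]

end NormalForm

section Parity

variable (χ : UnivCoxeter α →* Multiplicative (ZMod 2))
  (hχ : ∀ i, χ (PresentedGroup.of i) = Multiplicative.ofAdd 1)
include hχ

theorem map_wordProd (l : List α) :
    χ (wordProd l) = Multiplicative.ofAdd (l.length : ZMod 2) := by
  induction l with
  | nil => simp
  | cons a l ih => simp [hχ, ih, ← ofAdd_add, add_comm]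

theorem apply_eq_ofAdd_one_of_mul_self {y : UnivCoxeter α} (h : y * y = 1) (hy : y ≠ 1) :
    χ y = Multiplicative.ofAdd 1 := by
  classical
  have hodd : Odd (normalForm y).length :=
    Nat.not_even_iff_odd.1 fun he => hy (eq_one_of_mul_self_of_even h he)
  rw [← wordProd_normalForm y, map_wordProd χ hχ, ZMod.natCast_eq_one_iff_odd.2 hodd]

theorem comp_mulEquiv (φ : UnivCoxeter α ≃* UnivCoxeter α) : χ.comp φ.toMonoidHom = χ := by
  refine PresentedGroup.ext fun i => ?_
  have hsq : φ (PresentedGroup.of i) * φ (PresentedGroup.of i) = 1 := by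
    rw [← map_mul, of_mul_self, map_one]
  have hne : φ (PresentedGroup.of i) ≠ 1 := by
    intro h1
    have := hχ i
    rw [φ.map_eq_one_iff.1 h1, map_one] at this
    exact absurd this (by decide)
  simpa [hχ] using apply_eq_ofAdd_one_of_mul_self χ hχ hsq hne

end Parity

end UnivCoxeter

open W3

theorem statement13 : ∀ φ : MulAut W3, E.map φ.toMonoidHom = E := by
  intro φ
  have hχ : ∀ i, parity (PresentedGroup.of i) = Multiplicative.ofAdd 1 :=
    fun _ => PresentedGroup.toGroup.of _
  rw [E, Subgroup.map_equiv_eq_comap_symm', MonoidHom.comap_ker]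
  -- `W3` is `UnivCoxeter (Fin 3)` once `cox3Rels` is unfolded.
  exact congrArg MonoidHom.ker (UnivCoxeter.comp_mulEquiv parity hχ φ.symm)
end

section
/- Let W₃ = ⟨r, s, t | r² = s² = t² = 1⟩ and let E be the kernel of the homomorphism W₃ → ℤ/2ℤ sending each of r, s, t to 1. Then the centralizer of E in W₃ is the trivial subgroup. -/
open W3


namespace SqLemma
open FreeGroup List

variable {α : Type*} [DecidableEq α]

/-- no-cancellation relation between adjacent letters -/
def RR : (α × Bool) → (α × Bool) → Prop := fun p q => ¬(p.1 = q.1 ∧ p.2 = !q.2)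

theorem reduce_eq_self_of_chain : ∀ L : List (α × Bool), List.Chain' RR L → FreeGroup.reduce L = L
  | [], _ => rfl
  | x :: L, h => by
    have hL : FreeGroup.reduce L = L := reduce_eq_self_of_chain L h.tail
    rw [FreeGroup.reduce.cons, hL]
    cases L with
    | nil => rfl
    | cons y L' =>
      have hxy : RR x y := List.isChain_cons_cons.1 h |>.1
      simp only [RR] at hxy
      simp [if_neg hxy]

theorem reduce_length_le (L : List (α × Bool)) : (FreeGroup.reduce L).length ≤ L.length :=
  (FreeGroup.Red.length_le (FreeGroup.reduce.red))

theorem chain_of_reduce_eq_self : ∀ L : List (α × Bool), FreeGroup.reduce L = L → List.Chain' RR L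
  | [], _ => List.isChain_nil
  | [x], _ => List.isChain_singleton x
  | x :: y :: L, h => by
    -- first, the tail is reduced
    have htail : FreeGroup.reduce (y :: L) = y :: L := by
      by_contra hne
      have hred : FreeGroup.Red (y :: L) (FreeGroup.reduce (y :: L)) := FreeGroup.reduce.red
      have h1 : FreeGroup.Red (x :: y :: L) (x :: FreeGroup.reduce (y :: L)) :=
        FreeGroup.Red.cons_cons hred
      have h2 : FreeGroup.reduce (x :: y :: L) = FreeGroup.reduce (x :: FreeGroup.reduce (y :: L)) :=
        FreeGroup.reduce.eq_of_red h1
      have hlen : (FreeGroup.reduce (y :: L)).length < (y :: L).length := by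
        rcases lt_or_eq_of_le (reduce_length_le (y :: L)) with h | h
        · exact h
        · exact absurd (FreeGroup.Red.sublist hred |>.eq_of_length h) hne
      have : (x :: y :: L).length ≤ 1 + (FreeGroup.reduce (y :: L)).length := by
        calc (x :: y :: L).length = (FreeGroup.reduce (x :: y :: L)).length := by rw [h]
        _ = (FreeGroup.reduce (x :: FreeGroup.reduce (y :: L))).length := by rw [h2]
        _ ≤ (x :: FreeGroup.reduce (y :: L)).length := reduce_length_le _
        _ = 1 + (FreeGroup.reduce (y :: L)).length := by simp [Nat.add_comm]
      simp only [List.length_cons] at this hlen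
      omega
    have hchain := chain_of_reduce_eq_self (y :: L) htail
    refine List.isChain_cons_cons.2 ⟨?_, hchain⟩
    obtain ⟨xa, xb⟩ := x; obtain ⟨ya, yb⟩ := y
    rintro ⟨h1, h2⟩
    simp only at h1 h2
    subst h1; subst h2
    exact FreeGroup.reduce.not (p := False) (L₂ := []) (L₃ := L) (x := xa) (b := !yb)
      (by rw [Bool.not_not]; exact h)

theorem reduced_append (L₁ L₂ : List (α × Bool)) (h₁ : FreeGroup.reduce L₁ = L₁)
    (h₂ : FreeGroup.reduce L₂ = L₂)
    (hj : ∀ x ∈ L₁.getLast?, ∀ y ∈ L₂.head?, RR x y) :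
    FreeGroup.reduce (L₁ ++ L₂) = L₁ ++ L₂ := by
  apply reduce_eq_self_of_chain
  exact List.isChain_append.2 ⟨chain_of_reduce_eq_self _ h₁, chain_of_reduce_eq_self _ h₂, hj⟩

theorem sq_aux : ∀ n (w : FreeGroup α), (FreeGroup.toWord w).length ≤ n → w * w = 1 → w = 1 := by
  intro n
  induction n with
  | zero =>
    intro w hw _
    rw [Nat.le_zero, List.length_eq_zero_iff] at hw
    exact FreeGroup.toWord_eq_nil_iff.1 hw
  | succ n ih =>
    intro w hw hsq
    set l := FreeGroup.toWord w with hl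
    have hlred : FreeGroup.reduce l = l := FreeGroup.reduce_toWord w
    have hwmk : w = FreeGroup.mk l := (FreeGroup.mk_toWord).symm
    rcases hcase : l with _ | ⟨⟨a, b⟩, xs⟩
    · exact FreeGroup.toWord_eq_nil_iff.1 (hl ▸ hcase)
    rcases List.eq_nil_or_concat xs with rfl | ⟨m, ⟨za, zb⟩, rfl⟩
    · -- singleton: l = [(a,b)], square is reduced, contradiction
      exfalso
      have hred2 : FreeGroup.reduce (l ++ l) = l ++ l := by
        apply reduced_append l l hlred hlred
        intro x hx y hy
        rw [hcase] at hx hy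
        simp only [List.getLast?_singleton, List.head?_cons, Option.mem_some_iff] at hx hy
        subst hx; subst hy
        rintro ⟨-, hb⟩
        exact Bool.not_ne_self b hb.symm
      have h1 : (w * w).toWord = [] := by rw [hsq]; exact FreeGroup.toWord_one
      rw [hwmk, FreeGroup.mul_mk, FreeGroup.toWord_mk, hred2] at h1
      simp [hcase] at h1
    · -- l = (a,b) :: m ++ [(za,zb)]
      have hl2 : l = ((a,b) :: m) ++ [(za,zb)] := by rw [hcase]; simp
      by_cases hjunction : RR ((za,zb)) ((a,b))
      · exfalso
        have hred2 : FreeGroup.reduce (l ++ l) = l ++ l := by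
          apply reduced_append l l hlred hlred
          intro x hx y hy
          rw [hl2, List.getLast?_concat, Option.mem_some_iff] at hx
          rw [hcase] at hy
          simp only [List.head?_cons, Option.mem_some_iff] at hy
          subst hx; subst hy
          exact hjunction
        have h1 : (w * w).toWord = [] := by rw [hsq]; exact FreeGroup.toWord_one
        rw [hwmk, FreeGroup.mul_mk, FreeGroup.toWord_mk, hred2] at h1
        simp [hcase] at h1
      · simp only [RR, not_not] at hjunction
        obtain ⟨rfl, rfl⟩ := hjunction
        set c := FreeGroup.mk [((za : α), b)] with hc
        have hcinv : c⁻¹ = FreeGroup.mk [(za, !b)] := by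
          rw [hc, FreeGroup.inv_mk]; rfl
        set u := FreeGroup.mk m with hu
        have hw_decomp : w = c * u * c⁻¹ := by
          rw [hwmk, hcase, hcinv, hc, hu, FreeGroup.mul_mk, FreeGroup.mul_mk]
          simp
        have husq : u * u = 1 := by
          have h3 : u = c⁻¹ * w * c := by rw [hw_decomp]; group
          rw [h3]
          calc c⁻¹ * w * c * (c⁻¹ * w * c) = c⁻¹ * (w * w) * c := by group
          _ = 1 := by rw [hsq]; group
        have hulen : (FreeGroup.toWord u).length ≤ n := by
          have h4 : (FreeGroup.toWord u).length ≤ m.length := by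
            rw [hu, FreeGroup.toWord_mk]
            exact reduce_length_le m
          have h5 : l.length = m.length + 2 := by rw [hcase]; simp
          omega
        rw [hw_decomp, ih u hulen husq]
        group
    

theorem sq_eq_one {w : FreeGroup α} (h : w * w = 1) : w = 1 :=
  sq_aux (FreeGroup.toWord w).length w le_rfl h

end SqLemma


namespace Sanov
open Pointwise

abbrev Vec := {v : Fin 2 → ℤ // v ≠ 0}

lemma two_by_two_eq_one : !![(1:ℤ),0;0,1] = 1 := Matrix.one_fin_two.symm

def Amat : GL (Fin 2) ℤ :=
  ⟨!![1,2;0,1], !![1,-2;0,1],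
    by rw [Matrix.mul_fin_two]; norm_num [two_by_two_eq_one],
    by rw [Matrix.mul_fin_two]; norm_num [two_by_two_eq_one]⟩

def Bmat : GL (Fin 2) ℤ :=
  ⟨!![1,0;2,1], !![1,0;-2,1],
    by rw [Matrix.mul_fin_two]; norm_num [two_by_two_eq_one],
    by rw [Matrix.mul_fin_two]; norm_num [two_by_two_eq_one]⟩

instance : SMul (GL (Fin 2) ℤ) Vec :=
  ⟨fun g v => ⟨(g : Matrix (Fin 2) (Fin 2) ℤ).mulVec v.1, by
    intro h0
    apply v.2
    have hgg : ((g⁻¹ : GL (Fin 2) ℤ) : Matrix (Fin 2) (Fin 2) ℤ) *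
        ((g : GL (Fin 2) ℤ) : Matrix (Fin 2) (Fin 2) ℤ) = 1 := by
      have h2 := congrArg Units.val (inv_mul_cancel g)
      rwa [Units.val_mul, Units.val_one] at h2
    have h1 : ((g⁻¹ : GL (Fin 2) ℤ) : Matrix (Fin 2) (Fin 2) ℤ).mulVec
        (((g : GL (Fin 2) ℤ) : Matrix (Fin 2) (Fin 2) ℤ).mulVec v.1) = v.1 := by
      rw [Matrix.mulVec_mulVec, hgg, Matrix.one_mulVec]
    rw [h0, Matrix.mulVec_zero] at h1
    exact h1.symm⟩⟩

lemma smul_val (g : GL (Fin 2) ℤ) (v : Vec) :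
    (g • v).1 = (g : Matrix (Fin 2) (Fin 2) ℤ).mulVec v.1 := rfl

instance : MulAction (GL (Fin 2) ℤ) Vec where
  one_smul v := by
    apply Subtype.ext
    rw [smul_val]
    norm_num [Matrix.one_mulVec]
  mul_smul g h v := by
    apply Subtype.ext
    rw [smul_val, smul_val, smul_val, Matrix.mulVec_mulVec]
    norm_num

lemma mulVec_explicit (a b c d : ℤ) (v : Fin 2 → ℤ) :
    (!![a,b;c,d]).mulVec v = ![a * v 0 + b * v 1, c * v 0 + d * v 1] := by
  funext i
  fin_cases i <;> simp [Matrix.mulVec, dotProduct, Fin.sum_univ_two]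

lemma A_smul (v : Vec) (i : Fin 2) :
    (Amat • v).1 i = ![v.1 0 + 2 * v.1 1, v.1 1] i := by
  rw [smul_val]
  show (!![1,2;0,1]).mulVec v.1 i = _
  rw [mulVec_explicit]
  fin_cases i <;> simp <;> ring

lemma Ainv_smul (v : Vec) (i : Fin 2) :
    (Amat⁻¹ • v).1 i = ![v.1 0 - 2 * v.1 1, v.1 1] i := by
  rw [smul_val]
  show (!![1,-2;0,1]).mulVec v.1 i = _
  rw [mulVec_explicit]
  fin_cases i <;> simp <;> ring

lemma B_smul (v : Vec) (i : Fin 2) :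
    (Bmat • v).1 i = ![v.1 0, 2 * v.1 0 + v.1 1] i := by
  rw [smul_val]
  show (!![1,0;2,1]).mulVec v.1 i = _
  rw [mulVec_explicit]
  fin_cases i <;> simp <;> ring

lemma Binv_smul (v : Vec) (i : Fin 2) :
    (Bmat⁻¹ • v).1 i = ![v.1 0, -2 * v.1 0 + v.1 1] i := by
  rw [smul_val]
  show (!![1,0;-2,1]).mulVec v.1 i = _
  rw [mulVec_explicit]
  fin_cases i <;> simp <;> ring

def X0 : Set Vec := {v | v.1 1 = 0 ∨ (0 < v.1 0 * v.1 1 ∧ (v.1 1)^2 < (v.1 0)^2)}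
def X1 : Set Vec := {v | v.1 0 = 0 ∨ (0 < v.1 0 * v.1 1 ∧ (v.1 0)^2 ≤ (v.1 1)^2)}
def Y0 : Set Vec := {v | v.1 0 * v.1 1 < 0 ∧ (v.1 1)^2 ≤ (v.1 0)^2}
def Y1 : Set Vec := {v | v.1 0 * v.1 1 < 0 ∧ (v.1 0)^2 < (v.1 1)^2}

def XS : Fin 2 → Set Vec := ![X0, X1]
def YS : Fin 2 → Set Vec := ![Y0, Y1]

lemma vec_ne (v : Vec) : v.1 0 ≠ 0 ∨ v.1 1 ≠ 0 := by
  by_contra h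
  push_neg at h
  apply v.2
  funext i; fin_cases i <;> simp [h.1, h.2]

lemma X0_X1_disj : Disjoint X0 X1 := by
  rw [Set.disjoint_left]
  rintro v (h1 | ⟨h1, h2⟩) (h3 | ⟨h3, h4⟩)
  · rcases vec_ne v with hv | hv <;> simp_all
  · rw [h1] at h3; simp at h3
  · rw [h3] at h1; simp at h1
  · nlinarith
lemma Y0_Y1_disj : Disjoint Y0 Y1 := by
  rw [Set.disjoint_left]
  rintro v ⟨h1, h2⟩ ⟨h3, h4⟩
  nlinarith
lemma X0_Y0_disj : Disjoint X0 Y0 := by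
  rw [Set.disjoint_left]
  rintro v (h1 | ⟨h1, h2⟩) ⟨h3, h4⟩ <;> [skip; nlinarith]
  rw [h1] at h3; simp at h3
lemma X0_Y1_disj : Disjoint X0 Y1 := by
  rw [Set.disjoint_left]
  rintro v (h1 | ⟨h1, h2⟩) ⟨h3, h4⟩ <;> [skip; nlinarith]
  rw [h1] at h3; simp at h3
lemma X1_Y0_disj : Disjoint X1 Y0 := by
  rw [Set.disjoint_left]
  rintro v (h1 | ⟨h1, h2⟩) ⟨h3, h4⟩ <;> [skip; nlinarith]
  rw [h1] at h3; simp at h3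
lemma X1_Y1_disj : Disjoint X1 Y1 := by
  rw [Set.disjoint_left]
  rintro v (h1 | ⟨h1, h2⟩) ⟨h3, h4⟩ <;> [skip; nlinarith]
  rw [h1] at h3; simp at h3

theorem lift_injective : Function.Injective (FreeGroup.lift ![Amat, Bmat]) := by
  apply FreeGroup.injective_lift_of_ping_pong ![Amat, Bmat] XS YS
  · -- nonempty
    intro i
    fin_cases i
    · exact ⟨⟨![1, 0], by intro h; simpa using congrFun h 0⟩, Or.inl rfl⟩
    · exact ⟨⟨![0, 1], by intro h; simpa using congrFun h 1⟩, Or.inl rfl⟩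
  · -- X pairwise disjoint
    intro i j hij
    fin_cases i <;> fin_cases j
    · exact absurd rfl hij
    · exact X0_X1_disj
    · exact X0_X1_disj.symm
    · exact absurd rfl hij
  · -- Y pairwise disjoint
    intro i j hij
    fin_cases i <;> fin_cases j
    · exact absurd rfl hij
    · exact Y0_Y1_disj
    · exact Y0_Y1_disj.symm
    · exact absurd rfl hij
  · -- X vs Y disjoint
    intro i j
    fin_cases i <;> fin_cases j
    · exact X0_Y0_disj
    · exact X0_Y1_disj
    · exact X1_Y0_disj
    · exact X1_Y1_disj
  · -- a i • (Y i)ᶜ ⊆ X i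
    intro i
    fin_cases i
    · show Amat • Y0ᶜ ⊆ X0
      rintro u ⟨v, hv, rfl⟩
      simp only [Set.mem_compl_iff, Y0, Set.mem_setOf_eq, not_and, not_le, not_lt] at hv
      simp only [X0, Set.mem_setOf_eq, A_smul]
      simp only [Matrix.cons_val_zero, Matrix.cons_val_one, Matrix.head_cons]
      set x := v.1 0; set y := v.1 1
      by_cases hy : y = 0
      · exact Or.inl hy
      · refine Or.inr ⟨?_, ?_⟩ <;>
        · have hy2 : 0 < y^2 := by positivity
          rcases lt_or_ge (x * y) 0 with hxy | hxy
          · have hsq := hv hxy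
            nlinarith [sq_nonneg (x + y), sq_nonneg (x - y)]
          · nlinarith [sq_nonneg (x + y), sq_nonneg (x - y)]
    · show Bmat • Y1ᶜ ⊆ X1
      rintro u ⟨v, hv, rfl⟩
      simp only [Set.mem_compl_iff, Y1, Set.mem_setOf_eq, not_and, not_le, not_lt] at hv
      simp only [X1, Set.mem_setOf_eq, B_smul]
      simp only [Matrix.cons_val_zero, Matrix.cons_val_one, Matrix.head_cons]
      set x := v.1 0; set y := v.1 1
      by_cases hx : x = 0
      · exact Or.inl hx
      · refine Or.inr ⟨?_, ?_⟩ <;>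
        · have hx2 : 0 < x^2 := by positivity
          rcases lt_or_ge (x * y) 0 with hxy | hxy
          · have hsq := hv hxy
            nlinarith [sq_nonneg (x + y), sq_nonneg (x - y)]
          · nlinarith [sq_nonneg (x + y), sq_nonneg (x - y)]
  · -- (a i)⁻¹ • (X i)ᶜ ⊆ Y i
    intro i
    fin_cases i
    · show Amat⁻¹ • X0ᶜ ⊆ Y0
      rintro u ⟨v, hv, rfl⟩
      simp only [Set.mem_compl_iff, X0, Set.mem_setOf_eq, not_or, not_and, not_lt] at hv
      obtain ⟨hy, hrest⟩ := hv
      simp only [Y0, Set.mem_setOf_eq, Ainv_smul]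
      simp only [Matrix.cons_val_zero, Matrix.cons_val_one, Matrix.head_cons]
      set x := v.1 0; set y := v.1 1
      have hy2 : 0 < y^2 := by positivity
      constructor <;>
      · rcases le_or_gt (x * y) 0 with hxy | hxy
        · nlinarith [sq_nonneg (x + y), sq_nonneg (x - y)]
        · have hsq := hrest hxy
          nlinarith [sq_nonneg (x + y), sq_nonneg (x - y)]
    · show Bmat⁻¹ • X1ᶜ ⊆ Y1
      rintro u ⟨v, hv, rfl⟩
      simp only [Set.mem_compl_iff, X1, Set.mem_setOf_eq, not_or, not_and, not_le] at hv
      obtain ⟨hx, hrest⟩ := hv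
      simp only [Y1, Set.mem_setOf_eq, Binv_smul]
      simp only [Matrix.cons_val_zero, Matrix.cons_val_one, Matrix.head_cons]
      set x := v.1 0; set y := v.1 1
      have hx2 : 0 < x^2 := by positivity
      constructor <;>
      · rcases le_or_gt (x * y) 0 with hxy | hxy
        · nlinarith [sq_nonneg (x + y), sq_nonneg (x - y)]
        · have hsq := hrest hxy
          nlinarith [sq_nonneg (x + y), sq_nonneg (x - y)]

end Sanov


noncomputable section Main
open W3 Sanov

-- the three reflection matrices
def Rmat : GL (Fin 2) ℤ :=
  ⟨!![1,0;0,-1], !![1,0;0,-1],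
    by rw [Matrix.mul_fin_two]; norm_num [two_by_two_eq_one],
    by rw [Matrix.mul_fin_two]; norm_num [two_by_two_eq_one]⟩

def Smat : GL (Fin 2) ℤ :=
  ⟨!![1,-2;0,-1], !![1,-2;0,-1],
    by rw [Matrix.mul_fin_two]; norm_num [two_by_two_eq_one],
    by rw [Matrix.mul_fin_two]; norm_num [two_by_two_eq_one]⟩

def Tmat : GL (Fin 2) ℤ :=
  ⟨!![1,0;2,-1], !![1,0;2,-1],
    by rw [Matrix.mul_fin_two]; norm_num [two_by_two_eq_one],
    by rw [Matrix.mul_fin_two]; norm_num [two_by_two_eq_one]⟩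

lemma SR_eq_A : Smat * Rmat = Amat := by
  apply Units.ext
  show (!![1,-2;0,-1] : Matrix (Fin 2) (Fin 2) ℤ) * !![1,0;0,-1] = !![1,2;0,1]
  rw [Matrix.mul_fin_two]; norm_num

lemma TR_eq_B : Tmat * Rmat = Bmat := by
  apply Units.ext
  show (!![1,0;2,-1] : Matrix (Fin 2) (Fin 2) ℤ) * !![1,0;0,-1] = !![1,0;2,1]
  rw [Matrix.mul_fin_two]; norm_num

/-- The reflection representation of `W3`. -/
def Psi : W3 →* GL (Fin 2) ℤ :=
  PresentedGroup.toGroup (f := ![Rmat, Smat, Tmat])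
    (by
      rintro w ⟨i, rfl⟩
      rw [map_pow, FreeGroup.lift_apply_of]
      fin_cases i
      · show Rmat ^ 2 = 1
        rw [pow_two]
        apply Units.ext
        show (!![1,0;0,-1] : Matrix (Fin 2) (Fin 2) ℤ) * !![1,0;0,-1] = 1
        rw [Matrix.mul_fin_two]; norm_num [two_by_two_eq_one]
      · show Smat ^ 2 = 1
        rw [pow_two]
        apply Units.ext
        show (!![1,-2;0,-1] : Matrix (Fin 2) (Fin 2) ℤ) * !![1,-2;0,-1] = 1
        rw [Matrix.mul_fin_two]; norm_num [two_by_two_eq_one]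
      · show Tmat ^ 2 = 1
        rw [pow_two]
        apply Units.ext
        show (!![1,0;2,-1] : Matrix (Fin 2) (Fin 2) ℤ) * !![1,0;2,-1] = 1
        rw [Matrix.mul_fin_two]; norm_num [two_by_two_eq_one])

lemma Psi_r : Psi r = Rmat := PresentedGroup.toGroup.of _
lemma Psi_s : Psi s = Smat := PresentedGroup.toGroup.of _
lemma Psi_t : Psi t = Tmat := PresentedGroup.toGroup.of _

/-- relations in `W3` -/
lemma gen_sq (i : Fin 3) :
    (PresentedGroup.of (rels := cox3Rels) i) * PresentedGroup.of i = 1 := by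
  have h : PresentedGroup.mk cox3Rels (FreeGroup.of i ^ 2) = 1 :=
    (QuotientGroup.eq_one_iff _).2 (Subgroup.subset_normalClosure ⟨i, rfl⟩)
  rw [pow_two, map_mul] at h
  exact h

lemma rr : r * r = 1 := gen_sq 0
lemma ss : s * s = 1 := gen_sq 1
lemma tt : t * t = 1 := gen_sq 2
lemma rinv : r⁻¹ = r := inv_eq_of_mul_eq_one_right rr
lemma sinv : s⁻¹ = s := inv_eq_of_mul_eq_one_right ss
lemma tinv : t⁻¹ = t := inv_eq_of_mul_eq_one_right tt

/-- the free group mapping onto the even subgroup -/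
def Phi : FreeGroup (Fin 2) →* W3 := FreeGroup.lift ![s * r, t * r]

lemma Phi_of0 : Phi (FreeGroup.of 0) = s * r := FreeGroup.lift_apply_of
lemma Phi_of1 : Phi (FreeGroup.of 1) = t * r := FreeGroup.lift_apply_of

lemma Psi_comp_Phi : Psi.comp Phi = FreeGroup.lift ![Amat, Bmat] := by
  apply FreeGroup.ext_hom
  intro i
  fin_cases i
  · show Psi (Phi (FreeGroup.of 0)) = FreeGroup.lift ![Amat, Bmat] (FreeGroup.of 0)
    rw [Phi_of0, map_mul, Psi_s, Psi_r, SR_eq_A, FreeGroup.lift_apply_of]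
    rfl
  · show Psi (Phi (FreeGroup.of 1)) = FreeGroup.lift ![Amat, Bmat] (FreeGroup.of 1)
    rw [Phi_of1, map_mul, Psi_t, Psi_r, TR_eq_B, FreeGroup.lift_apply_of]
    rfl

lemma Phi_injective : Function.Injective Phi := by
  intro x y h
  apply Sanov.lift_injective
  have hx : Psi (Phi x) = Psi (Phi y) := by rw [h]
  rwa [← MonoidHom.comp_apply, ← MonoidHom.comp_apply, Psi_comp_Phi] at hx

/-- The group generated by `sr` and `tr`. -/
def D : Subgroup W3 := Subgroup.closure {s * r, t * r}

lemma sr_mem_D : s * r ∈ D := Subgroup.subset_closure (Set.mem_insert _ _)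
lemma tr_mem_D : t * r ∈ D := Subgroup.subset_closure (Set.mem_insert_of_mem _ rfl)

lemma rconj : ∀ d ∈ D, r * d * r ∈ D := by
  intro d hd
  induction hd using Subgroup.closure_induction with
  | mem x hx =>
    rcases hx with rfl | hx
    · have h1 : r * (s * r) * r = (s * r)⁻¹ := by
        rw [mul_inv_rev, rinv, sinv]
        calc r * (s * r) * r = r * s * (r * r) := by group
        _ = r * s := by rw [rr, mul_one]
      rw [h1]
      exact inv_mem sr_mem_D
    · rcases hx with rfl
      have h1 : r * (t * r) * r = (t * r)⁻¹ := by
        rw [mul_inv_rev, rinv, tinv]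
        calc r * (t * r) * r = r * t * (r * r) := by group
        _ = r * t := by rw [rr, mul_one]
      rw [h1]
      exact inv_mem tr_mem_D
  | one => rw [mul_one, rr]; exact one_mem D
  | mul x y hx hy ihx ihy =>
    have h1 : r * (x * y) * r = (r * x * r) * (r * y * r) := by
      calc r * (x * y) * r = r * x * (r * r) * y * r := by rw [rr]; group
      _ = (r * x * r) * (r * y * r) := by group
    rw [h1]
    exact mul_mem ihx ihy
  | inv x hx ihx =>
    have h1 : r * x⁻¹ * r = (r * x * r)⁻¹ := by
      rw [mul_inv_rev, mul_inv_rev, rinv]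
      group
    rw [h1]
    exact inv_mem ihx

/-- every element of `W3` lies in `D` or in `D·r`. -/
lemma mem_D_or (g : W3) : g ∈ D ∨ g * r ∈ D := by
  let K : Subgroup W3 :=
    { carrier := {g | g ∈ D ∨ g * r ∈ D}
      one_mem' := Or.inl (one_mem D)
      mul_mem' := by
        rintro a b (ha | ha) (hb | hb)
        · exact Or.inl (mul_mem ha hb)
        · refine Or.inr ?_
          rw [mul_assoc]
          exact mul_mem ha hb
        · refine Or.inr ?_
          have h1 : a * b * r = (a * r) * (r * b * r) := by
            calc a * b * r = a * (r * r) * b * r := by rw [rr]; group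
            _ = (a * r) * (r * b * r) := by group
          rw [h1]
          exact mul_mem ha (rconj b hb)
        · refine Or.inl ?_
          have h1 : a * b = (a * r) * (r * (b * r) * r) := by
            calc a * b = a * (r * r) * b * (r * r) := by rw [rr]; group
            _ = (a * r) * (r * (b * r) * r) := by group
          rw [h1]
          exact mul_mem ha (rconj _ hb)
      inv_mem' := by
        rintro a (ha | ha)
        · exact Or.inl (inv_mem ha)
        · refine Or.inr ?_
          have h2 := rconj _ (inv_mem ha)
          have h1 : r * (a * r)⁻¹ * r = a⁻¹ * r := by
            rw [mul_inv_rev]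
            group
          rwa [h1] at h2 }
  have : ∀ j : Fin 3, PresentedGroup.of (rels := cox3Rels) j ∈ K := by
    intro j
    fin_cases j
    · refine Or.inr ?_
      show r * r ∈ D
      rw [rr]; exact one_mem D
    · exact Or.inr sr_mem_D
    · exact Or.inr tr_mem_D
  exact PresentedGroup.generated_by cox3Rels K this g

lemma D_le_range : D ≤ Phi.range := by
  apply (Subgroup.closure_le _).2
  rintro x (rfl | hx)
  · exact ⟨FreeGroup.of 0, Phi_of0⟩
  · rcases hx with rfl
    exact ⟨FreeGroup.of 1, Phi_of1⟩

lemma sr_mem_E : s * r ∈ E := by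
  show parity (s * r) = 1
  rw [map_mul]
  show parity (PresentedGroup.of 1) * parity (PresentedGroup.of 0) = 1
  rw [parity, PresentedGroup.toGroup.of, PresentedGroup.toGroup.of]
  decide

lemma tr_mem_E : t * r ∈ E := by
  show parity (t * r) = 1
  rw [map_mul]
  show parity (PresentedGroup.of 2) * parity (PresentedGroup.of 0) = 1
  rw [parity, PresentedGroup.toGroup.of, PresentedGroup.toGroup.of]
  decide

/-- abelianization test map -/
def chi : FreeGroup (Fin 2) →* Multiplicative ℤ :=
  FreeGroup.lift fun _ => Multiplicative.ofAdd (1 : ℤ)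

/-- a matrix commuting with both `Amat` and `Bmat` squares to one -/
lemma commuting_sq_one (N : GL (Fin 2) ℤ) (hA : Amat * N = N * Amat)
    (hB : Bmat * N = N * Bmat) : N * N = 1 := by
  set n := (N : Matrix (Fin 2) (Fin 2) ℤ) with hn
  have hA' : (!![1,2;0,1] : Matrix (Fin 2) (Fin 2) ℤ) * n = n * !![1,2;0,1] := by
    have := congrArg Units.val hA
    rwa [Units.val_mul, Units.val_mul] at this
  have hB' : (!![1,0;2,1] : Matrix (Fin 2) (Fin 2) ℤ) * n = n * !![1,0;2,1] := by
    have := congrArg Units.val hB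
    rwa [Units.val_mul, Units.val_mul] at this
  have h10 : n 1 0 = 0 := by
    have h := congrFun (congrFun hA' 0) 0
    simp [Matrix.mul_apply, Fin.sum_univ_two] at h
    linarith
  have h0011 : n 1 1 = n 0 0 := by
    have h := congrFun (congrFun hA' 0) 1
    simp [Matrix.mul_apply, Fin.sum_univ_two] at h
    linarith
  have h01 : n 0 1 = 0 := by
    have h := congrFun (congrFun hB' 0) 0
    simp [Matrix.mul_apply, Fin.sum_univ_two] at h
    linarith
  have hdet : IsUnit n.det := (Matrix.isUnit_iff_isUnit_det n).1 ⟨N, rfl⟩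
  have hdet2 : n.det = n 0 0 * n 0 0 := by
    rw [Matrix.det_fin_two, h10, h0011]
    ring
  have hsq : n 0 0 * n 0 0 = 1 := by
    rcases Int.isUnit_iff.1 hdet with h | h <;> rw [hdet2] at h
    · exact h
    · nlinarith
  apply Units.ext
  rw [Units.val_mul, Units.val_one, ← hn]
  ext i j
  fin_cases i <;> fin_cases j <;>
    simp [Matrix.mul_apply, Fin.sum_univ_two, h10, h01, h0011, hsq, Matrix.one_apply]

theorem statement14' : Subgroup.centralizer (E : Set W3) = ⊥ := by
  rw [eq_bot_iff]
  intro g hg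
  rw [Subgroup.mem_centralizer_iff] at hg
  rw [Subgroup.mem_bot]
  rcases mem_D_or g with hD | hDr
  · obtain ⟨v, rfl⟩ := D_le_range hD
    have c0 : FreeGroup.of 0 * v = v * FreeGroup.of 0 := by
      apply Phi_injective
      rw [map_mul, map_mul, Phi_of0]
      exact hg _ sr_mem_E
    have c1 : FreeGroup.of 1 * v = v * FreeGroup.of 1 := by
      apply Phi_injective
      rw [map_mul, map_mul, Phi_of1]
      exact hg _ tr_mem_E
    set F := FreeGroup.lift ![Amat, Bmat] with hF
    have m0 : Amat * F v = F v * Amat := by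
      have := congrArg F c0
      rwa [map_mul, map_mul, hF, FreeGroup.lift_apply_of,
        show (![Amat, Bmat] 0) = Amat from rfl] at this
    have m1 : Bmat * F v = F v * Bmat := by
      have := congrArg F c1
      rwa [map_mul, map_mul, hF, FreeGroup.lift_apply_of,
        show (![Amat, Bmat] 1) = Bmat from rfl] at this
    have hsq : F (v * v) = 1 := by
      rw [map_mul]
      exact commuting_sq_one (F v) m0 m1
    have hvv : v * v = 1 := Sanov.lift_injective (by rw [hsq, map_one])
    have hv1 : v = 1 := SqLemma.sq_eq_one hvv
    rw [hv1, map_one]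
  · exfalso
    obtain ⟨v, hv⟩ := D_le_range hDr
    have hgr : g = Phi v * r := by
      rw [hv]
      calc g = g * (r * r) := by rw [rr, mul_one]
      _ = g * r * r := by group
    have h0 : (s * r) * g = g * (s * r) := hg _ sr_mem_E
    have key : (s * r) * Phi v = Phi v * (s * r)⁻¹ := by
      have e1 : (s * r) * (Phi v * r) * r = (Phi v * r) * (s * r) * r := by
        rw [← hgr, h0]
      calc (s * r) * Phi v = (s * r) * Phi v * (r * r) := by rw [rr, mul_one]
      _ = (s * r) * (Phi v * r) * r := by group
      _ = (Phi v * r) * (s * r) * r := e1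
      _ = Phi v * (r * s) * (r * r) := by group
      _ = Phi v * (r * s) := by rw [rr, mul_one]
      _ = Phi v * (s * r)⁻¹ := by rw [mul_inv_rev, rinv, sinv]
    have c0 : FreeGroup.of 0 * v = v * (FreeGroup.of 0)⁻¹ := by
      apply Phi_injective
      rw [map_mul, map_mul, map_inv, Phi_of0]
      exact key
    have := congrArg chi c0
    rw [map_mul, map_mul, map_inv] at this
    have hchi : chi (FreeGroup.of 0) = Multiplicative.ofAdd (1 : ℤ) := FreeGroup.lift_apply_of
    rw [hchi, mul_comm] at this
    have h2 : Multiplicative.ofAdd (1:ℤ) = (Multiplicative.ofAdd (1:ℤ))⁻¹ :=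
      mul_left_cancel this
    exact absurd h2 (by decide)

end Main

theorem statement14 : Subgroup.centralizer (E : Set W3) = ⊥ := statement14'
end

section
/- Let W₃ = ⟨r, s, t | r² = s² = t² = 1⟩ and let E be the kernel of the homomorphism W₃ → ℤ/2ℤ sending each of r, s, t to 1, so that E is characteristic in W₃ and every automorphism of W₃ restricts to an automorphism of E. Then the restriction homomorphism π : Aut(W₃) → Aut(E) is injective. -/
open W3


----------------------------------------------------------------
-- Part 1: free group lemmas
----------------------------------------------------------------

namespace Aux16

open FreeGroup

lemma invRev_cons {α : Type*} (x : α × Bool) (M : List (α × Bool)) :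
    invRev (x :: M) = invRev M ++ [(x.1, !x.2)] := by
  simp [invRev]

lemma commute_gens_eq_one (w : FreeGroup (Fin 2))
    (h0 : w * .of 0 = .of 0 * w) (h1 : w * .of 1 = .of 1 * w) : w = 1 := by
  classical
  by_contra hw
  set L := w.toWord with hLdef
  have hred : reduce L = L := w.reduce_toWord
  have hLne : L ≠ [] := by
    simpa [hLdef, FreeGroup.toWord_eq_nil_iff] using hw
  obtain ⟨⟨i, b⟩, tl, hL⟩ := List.exists_cons_of_ne_nil hLne
  obtain ⟨j, hji, hj⟩ : ∃ j : Fin 2, j ≠ i ∧ w * .of j = .of j * w := by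
    by_cases hi : i = 0
    · exact ⟨1, by simp [hi], h1⟩
    · exact ⟨0, fun h => hi h.symm, h0⟩
  have hw_mk : FreeGroup.mk L = w := FreeGroup.mk_toWord
  have hofj : (FreeGroup.of j : FreeGroup (Fin 2)) = FreeGroup.mk [(j, true)] := rfl
  have hRHS : (FreeGroup.of j * w).toWord = (j, true) :: L := by
    rw [← hw_mk, hofj, FreeGroup.mul_mk, FreeGroup.toWord_mk]
    show reduce ((j, true) :: L) = (j, true) :: L
    rw [reduce.cons, hred, hL]
    have : ¬((j, true).1 = (i, b).1 ∧ (j, true).2 = !(i, b).2) := by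
      rintro ⟨h, -⟩; exact hji h
    simp only [if_neg this]
  have hinvL : reduce (invRev L) = invRev L := by
    rw [FreeGroup.reduce_invRev, hred]
  have hILne : invRev L ≠ [] := by
    intro h
    apply hLne
    have := congrArg List.length h
    rw [invRev_length] at this
    exact List.length_eq_zero_iff.mp this
  obtain ⟨⟨k, d⟩, M, hM⟩ := List.exists_cons_of_ne_nil hILne
  have hwinv : (w * FreeGroup.of j)⁻¹ = FreeGroup.mk ((j, false) :: invRev L) := by
    rw [mul_inv_rev, ← hw_mk, hofj, FreeGroup.inv_mk, FreeGroup.inv_mk, FreeGroup.mul_mk]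
    rfl
  have hLHS : (w * FreeGroup.of j).toWord = invRev (reduce ((j, false) :: invRev L)) := by
    conv_lhs => rw [← inv_inv (w * FreeGroup.of j)]
    rw [FreeGroup.toWord_inv, hwinv, FreeGroup.toWord_mk]
  have heq : invRev (reduce ((j, false) :: invRev L)) = (j, true) :: L := by
    rw [← hLHS, hj, hRHS]
  rw [reduce.cons, hinvL, hM] at heq
  by_cases hcan : ((j, false) : Fin 2 × Bool).1 = ((k, d) : Fin 2 × Bool).1 ∧
      ((j, false) : Fin 2 × Bool).2 = !((k, d) : Fin 2 × Bool).2
  · simp only [if_pos hcan] at heq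
    have h1 : M.length = L.length + 1 := by
      have := congrArg List.length heq
      rw [invRev_length] at this
      simpa using this
    have h2 : L.length = M.length + 1 := by
      have := congrArg List.length hM
      rw [invRev_length] at this
      simpa using this
    omega
  · simp only [if_neg hcan] at heq
    have hcons : ((j, false) : Fin 2 × Bool) :: (k, d) :: M = (j, false) :: invRev L := by
      rw [hM]
    rw [hcons, invRev_cons, invRev_invRev] at heq
    rw [hL] at heq
    simp only [List.cons_append, List.cons.injEq, Prod.mk.injEq] at heq
    exact hji heq.1.1.symm

/-- exponent-sum contradiction -/
lemma no_twist (w : FreeGroup (Fin 2)) :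
    w * FreeGroup.of 0 ≠ (FreeGroup.of 0)⁻¹ * w := by
  intro h
  set e : FreeGroup (Fin 2) →* Multiplicative ℤ :=
    FreeGroup.lift (fun _ : Fin 2 => Multiplicative.ofAdd (1 : ℤ)) with he
  have := congrArg e h
  rw [e.map_mul, e.map_mul, e.map_inv] at this
  rw [mul_comm] at this
  have h2 := mul_right_cancel this
  have hgen : e (FreeGroup.of 0) = Multiplicative.ofAdd (1 : ℤ) := FreeGroup.lift_apply_of
  rw [hgen] at h2
  have : (1 : ℤ) = -1 := by simpa using congrArg Multiplicative.toAdd h2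
  omega

----------------------------------------------------------------
-- Part 2: semidirect product model
----------------------------------------------------------------

abbrev F2 := FreeGroup (Fin 2)

def invF : F2 →* F2 := FreeGroup.lift fun i => (FreeGroup.of i)⁻¹

lemma invF_invF (w : F2) : invF (invF w) = w := by
  have h : invF.comp invF = MonoidHom.id F2 := by
    ext i
    simp [invF]
  simpa using DFunLike.congr_fun h w

def tau : MulAut F2 :=
  { toFun := invF, invFun := invF, left_inv := invF_invF, right_inv := invF_invF,
    map_mul' := invF.map_mul }

lemma tau_of (i : Fin 2) : tau (FreeGroup.of i) = (FreeGroup.of i)⁻¹ := by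
  simp [tau, invF]

lemma tau_mul_tau : tau * tau = 1 := by
  ext w
  exact invF_invF w

def theta : ℤˣ →* MulAut F2 where
  toFun u := if u = 1 then 1 else tau
  map_one' := if_pos rfl
  map_mul' a b := by
    rcases Int.units_eq_one_or a with rfl | rfl <;>
      rcases Int.units_eq_one_or b with rfl | rfl <;>
      simp [tau_mul_tau]

lemma theta_neg_one : theta (-1) = tau := by
  simp [theta]

abbrev G3 := SemidirectProduct F2 ℤˣ theta

def phiGen : Fin 3 → G3
  | 0 => ⟨1, -1⟩
  | 1 => ⟨FreeGroup.of 0, -1⟩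
  | 2 => ⟨FreeGroup.of 1, -1⟩

lemma sq_aux (n : F2) (hn : tau n = n⁻¹) : (⟨n, -1⟩ : G3) * ⟨n, -1⟩ = 1 := by
  apply SemidirectProduct.ext
  · show n * theta (-1) n = 1
    rw [theta_neg_one, hn, mul_inv_cancel]
  · show (-1 : ℤˣ) * -1 = 1
    simp

lemma phiGen_sq (i : Fin 3) : phiGen i * phiGen i = 1 := by
  fin_cases i
  · exact sq_aux 1 (by simp)
  · exact sq_aux (FreeGroup.of 0) (tau_of 0)
  · exact sq_aux (FreeGroup.of 1) (tau_of 1)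

def Phi : W3 →* G3 :=
  PresentedGroup.toGroup (f := phiGen)
    (by rintro w ⟨i, rfl⟩
        rw [map_pow, FreeGroup.lift_apply_of, pow_two]
        exact phiGen_sq i)

end Aux16

----------------------------------------------------------------
-- Part 3: Psi, injectivity of Phi, key lemma
----------------------------------------------------------------

namespace Aux16

lemma of_sq (i : Fin 3) :
    (PresentedGroup.of (rels := cox3Rels) i) * PresentedGroup.of i = 1 := by
  have hmem : FreeGroup.of i ^ 2 ∈ Subgroup.normalClosure cox3Rels :=
    Subgroup.subset_normalClosure ⟨i, rfl⟩
  have h : (PresentedGroup.mk cox3Rels) (FreeGroup.of i ^ 2) = 1 :=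
    (QuotientGroup.eq_one_iff _).mpr hmem
  rw [pow_two, map_mul] at h
  exact h

lemma r_mul_r : r * r = 1 := of_sq 0
lemma s_mul_s : s * s = 1 := of_sq 1
lemma t_mul_t : t * t = 1 := of_sq 2
lemma r_inv : r⁻¹ = r := inv_eq_of_mul_eq_one_right r_mul_r
lemma s_inv : s⁻¹ = s := inv_eq_of_mul_eq_one_right s_mul_s
lemma t_inv : t⁻¹ = t := inv_eq_of_mul_eq_one_right t_mul_t

def genW : Fin 2 → W3
  | 0 => s * r
  | 1 => t * r

def psiN : F2 →* W3 := FreeGroup.lift genW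

def psiU : ℤˣ →* W3 where
  toFun u := if u = 1 then 1 else r
  map_one' := if_pos rfl
  map_mul' a b := by
    have hne : (-1 : ℤˣ) ≠ 1 := by decide
    rcases Int.units_eq_one_or a with rfl | rfl <;>
      rcases Int.units_eq_one_or b with rfl | rfl <;>
      simp [hne, r_mul_r]

lemma psi_comp (u : ℤˣ) :
    psiN.comp (theta u).toMonoidHom = (MulAut.conj (psiU u)).toMonoidHom.comp psiN := by
  rcases Int.units_eq_one_or u with rfl | rfl
  · ext i
    simp [theta, psiU]
  · have hne : (-1 : ℤˣ) ≠ 1 := by decide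
    ext i
    simp only [MonoidHom.comp_apply, MulEquiv.coe_toMonoidHom, theta_neg_one, tau_of,
      MulAut.conj_apply, map_inv, FreeGroup.lift_apply_of, psiN, psiU, MonoidHom.coe_mk,
      OneHom.coe_mk, if_neg hne]
    fin_cases i <;>
      simp [genW, mul_inv_rev, r_inv, s_inv, t_inv, mul_assoc, r_mul_r]

def Psi : G3 →* W3 := SemidirectProduct.lift psiN psiU psi_comp

lemma Phi_of (i : Fin 3) : Phi (PresentedGroup.of i) = phiGen i :=
  PresentedGroup.toGroup.of _

lemma Psi_mk (n : F2) (u : ℤˣ) : Psi ⟨n, u⟩ = psiN n * psiU u := by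
  rw [SemidirectProduct.mk_eq_inl_mul_inr, map_mul]
  simp [Psi]

lemma Psi_Phi (x : W3) : Psi (Phi x) = x := by
  have h : Psi.comp Phi = MonoidHom.id W3 := by
    apply PresentedGroup.ext
    intro i
    fin_cases i
    · show Psi (Phi (PresentedGroup.of 0)) = r
      rw [Phi_of]
      show Psi ⟨1, -1⟩ = r
      rw [Psi_mk, map_one, one_mul]
      simp [psiU]
    · show Psi (Phi (PresentedGroup.of 1)) = s
      rw [Phi_of]
      show Psi ⟨FreeGroup.of 0, -1⟩ = s
      rw [Psi_mk]
      have h1 : psiN (FreeGroup.of 0) = s * r := FreeGroup.lift_apply_of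
      have h2 : psiU (-1) = r := by simp [psiU]
      rw [h1, h2, mul_assoc, r_mul_r, mul_one]
    · show Psi (Phi (PresentedGroup.of 2)) = t
      rw [Phi_of]
      show Psi ⟨FreeGroup.of 1, -1⟩ = t
      rw [Psi_mk]
      have h1 : psiN (FreeGroup.of 1) = t * r := FreeGroup.lift_apply_of
      have h2 : psiU (-1) = r := by simp [psiU]
      rw [h1, h2, mul_assoc, r_mul_r, mul_one]
  exact DFunLike.congr_fun h x

lemma Phi_injective : Function.Injective Phi :=
  Function.LeftInverse.injective Psi_Phi

lemma Phi_rs : Phi (r * s) = ⟨(FreeGroup.of 0)⁻¹, 1⟩ := by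
  rw [map_mul]
  show Phi (PresentedGroup.of 0) * Phi (PresentedGroup.of 1) = _
  rw [Phi_of, Phi_of]
  show (⟨1, -1⟩ : G3) * ⟨FreeGroup.of 0, -1⟩ = _
  apply SemidirectProduct.ext
  · show (1 : F2) * theta (-1) (FreeGroup.of 0) = (FreeGroup.of 0)⁻¹
    rw [theta_neg_one, tau_of, one_mul]
  · show (-1 : ℤˣ) * -1 = 1
    simp

lemma Phi_rt : Phi (r * t) = ⟨(FreeGroup.of 1)⁻¹, 1⟩ := by
  rw [map_mul]
  show Phi (PresentedGroup.of 0) * Phi (PresentedGroup.of 2) = _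
  rw [Phi_of, Phi_of]
  show (⟨1, -1⟩ : G3) * ⟨FreeGroup.of 1, -1⟩ = _
  apply SemidirectProduct.ext
  · show (1 : F2) * theta (-1) (FreeGroup.of 1) = (FreeGroup.of 1)⁻¹
    rw [theta_neg_one, tau_of, one_mul]
  · show (-1 : ℤˣ) * -1 = 1
    simp

lemma key (x : W3) (h1 : x * (r * s) = (r * s) * x) (h2 : x * (r * t) = (r * t) * x) :
    x = 1 := by
  set w := (Phi x).left with hw
  set u := (Phi x).right with hu
  have hPx : Phi x = ⟨w, u⟩ := rfl
  have hm1 : Phi x * Phi (r * s) = Phi (r * s) * Phi x := by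
    rw [← map_mul, ← map_mul, h1]
  have hm2 : Phi x * Phi (r * t) = Phi (r * t) * Phi x := by
    rw [← map_mul, ← map_mul, h2]
  rw [hPx, Phi_rs] at hm1
  rw [hPx, Phi_rt] at hm2
  have e1 := congrArg SemidirectProduct.left hm1
  have e2 := congrArg SemidirectProduct.left hm2
  simp only [SemidirectProduct.mul_left, map_one, MulAut.one_apply] at e1 e2
  -- e1 : w * theta u (of 0)⁻¹ = (of 0)⁻¹ * w
  rcases Int.units_eq_one_or u with hu1 | hu1
  · rw [hu1] at e1 e2
    simp only [map_one, MulAut.one_apply] at e1 e2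
    have c0 : Commute w (FreeGroup.of 0) := by
      have h : Commute w ((FreeGroup.of 0)⁻¹) := e1
      simpa using h.inv_right
    have c1 : Commute w (FreeGroup.of 1) := by
      have h : Commute w ((FreeGroup.of 1)⁻¹) := e2
      simpa using h.inv_right
    have hw1 : w = 1 := commute_gens_eq_one w c0 c1
    apply Phi_injective
    rw [hPx, hw1, hu1, map_one]
    rfl
  · rw [hu1] at e1
    rw [theta_neg_one] at e1
    rw [map_inv, tau_of, inv_inv] at e1
    exact absurd e1 (no_twist w)

lemma helper {G : Type*} [Group G] {a b A B : G}
    (hA : A * A = 1) (hb : b * b = 1)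
    (hab : a * b = A * B) : B * b = A * a := by
  have h2 : A * (B * b) = a := by
    rw [← mul_assoc, ← hab, mul_assoc, hb, mul_one]
  calc B * b = (A * A) * (B * b) := by rw [hA, one_mul]
    _ = A * (A * (B * b)) := by rw [mul_assoc]
    _ = A * a := by rw [h2]

lemma helper2 {G : Type*} [Group G] {a b A B : G}
    (ha : a * a = 1) (hA : A * A = 1) (hb : b * b = 1) (hB : B * B = 1)
    (hab : a * b = A * B) :
    (A * a) * (A * B) = (A * B) * (A * a) := by
  have hkey := helper hA hb hab
  have L : (A * a) * (A * B) = A * b := by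
    calc (A * a) * (A * B) = A * (a * (A * B)) := by rw [mul_assoc]
      _ = A * (a * (a * b)) := by rw [← hab]
      _ = A * ((a * a) * b) := by rw [mul_assoc]
      _ = A * b := by rw [ha, one_mul]
  have R : (A * B) * (A * a) = A * b := by
    rw [← hkey, mul_assoc, ← mul_assoc B B b, hB, one_mul]
  rw [L, R]

end Aux16


open Aux16 in

theorem statement16 :
    ∀ φ ψ : MulAut W3, (∀ h ∈ E, φ h = ψ h) → φ = ψ := by
  intro φ ψ hE
  have hpr : parity r = Multiplicative.ofAdd 1 := PresentedGroup.toGroup.of _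
  have hps : parity s = Multiplicative.ofAdd 1 := PresentedGroup.toGroup.of _
  have hpt : parity t = Multiplicative.ofAdd 1 := PresentedGroup.toGroup.of _
  have hrs : r * s ∈ E := by
    show parity (r * s) = 1
    rw [map_mul, hpr, hps]; decide
  have hrt : r * t ∈ E := by
    show parity (r * t) = 1
    rw [map_mul, hpr, hpt]; decide
  have hab : φ r * φ s = ψ r * ψ s := by
    have h := hE _ hrs
    rw [map_mul, map_mul] at h
    exact h
  have hac : φ r * φ t = ψ r * ψ t := by
    have h := hE _ hrt
    rw [map_mul, map_mul] at h
    exact h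
  have haa : φ r * φ r = 1 := by rw [← map_mul, r_mul_r, map_one]
  have hbb : φ s * φ s = 1 := by rw [← map_mul, s_mul_s, map_one]
  have hcc : φ t * φ t = 1 := by rw [← map_mul, t_mul_t, map_one]
  have hAA : ψ r * ψ r = 1 := by rw [← map_mul, r_mul_r, map_one]
  have hBB : ψ s * ψ s = 1 := by rw [← map_mul, s_mul_s, map_one]
  have hCC : ψ t * ψ t = 1 := by rw [← map_mul, t_mul_t, map_one]
  have comm1 := helper2 haa hAA hbb hBB hab
  have comm2 := helper2 haa hAA hcc hCC hac
  -- transfer to W3 via ψ⁻¹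
  have hinv : ∀ y : W3, (ψ⁻¹ : MulAut W3) (ψ y) = y := fun y => by
    rw [← MulAut.mul_apply, inv_mul_cancel, MulAut.one_apply]
  have hinv2 : ∀ y : W3, ψ ((ψ⁻¹ : MulAut W3) y) = y := fun y => by
    rw [← MulAut.mul_apply, mul_inv_cancel, MulAut.one_apply]
  set x : W3 := ψ⁻¹ (ψ r * φ r) with hxdef
  have hx1 : x * (r * s) = (r * s) * x := by
    calc x * (r * s)
        = x * (ψ⁻¹ : MulAut W3) (ψ (r * s)) := by rw [hinv]
      _ = (ψ⁻¹ : MulAut W3) ((ψ r * φ r) * (ψ r * ψ s)) := by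
            rw [map_mul ψ r s, hxdef, ← map_mul]
      _ = (ψ⁻¹ : MulAut W3) ((ψ r * ψ s) * (ψ r * φ r)) := by rw [comm1]
      _ = (r * s) * x := by rw [map_mul, ← map_mul ψ r s, hinv, ← hxdef]
  have hx2 : x * (r * t) = (r * t) * x := by
    calc x * (r * t)
        = x * (ψ⁻¹ : MulAut W3) (ψ (r * t)) := by rw [hinv]
      _ = (ψ⁻¹ : MulAut W3) ((ψ r * φ r) * (ψ r * ψ t)) := by
            rw [map_mul ψ r t, hxdef, ← map_mul]
      _ = (ψ⁻¹ : MulAut W3) ((ψ r * ψ t) * (ψ r * φ r)) := by rw [comm2]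
      _ = (r * t) * x := by rw [map_mul, ← map_mul ψ r t, hinv, ← hxdef]
  have hx : x = 1 := key x hx1 hx2
  have hu1 : ψ r * φ r = 1 := by
    have h := congrArg (⇑ψ) hx
    rw [map_one, hxdef, hinv2] at h
    exact h
  have hub : ψ s * φ s = 1 := by rw [helper hAA hbb hab, hu1]
  have huc : ψ t * φ t = 1 := by rw [helper hAA hcc hac, hu1]
  have hr : φ r = ψ r := by
    calc φ r = (ψ r * ψ r) * φ r := by rw [hAA, one_mul]
      _ = ψ r * (ψ r * φ r) := by rw [mul_assoc]
      _ = ψ r := by rw [hu1, mul_one]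
  have hs : φ s = ψ s := by
    calc φ s = (ψ s * ψ s) * φ s := by rw [hBB, one_mul]
      _ = ψ s * (ψ s * φ s) := by rw [mul_assoc]
      _ = ψ s := by rw [hub, mul_one]
  have ht : φ t = ψ t := by
    calc φ t = (ψ t * ψ t) * φ t := by rw [hCC, one_mul]
      _ = ψ t * (ψ t * φ t) := by rw [mul_assoc]
      _ = ψ t := by rw [huc, mul_one]
  have hhom : MulEquiv.toMonoidHom φ = MulEquiv.toMonoidHom ψ := by
    apply PresentedGroup.ext
    intro i
    fin_cases i
    · exact hr
    · exact hs
    · exact ht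
  exact MulEquiv.ext fun g => DFunLike.congr_fun hhom g
end
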